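/- arXiv:1711.01042 — 2 statements merged into one kernel-verified Lean document; each statement's English description precedes it below -/
import Mathlib

section
/- Let E be a real inner product space and n a natural number. The normalized Gram–Schmidt map, which sends an n-tuple (v₁,…,vₙ) of vectors of E to the n-tuple obtained by the Gram–Schmidt orthonormalization procedure (at each step subtracting the orthogonal projections onto the previously constructed vectors and normalizing), is continuous at every linearly independent n-tuple (v₁,…,vₙ). -/
/-! Each Gram–Schmidt vector is the input vector minus its projections onto the earlier
Gram–Schmidt vectors, an expression built from inner products, norms and divisions by the
squared norms of those earlier vectors. By strong induction along the index these are all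
continuous at a linearly independent family, where none of the divisors vanishes;
normalizing divides once more by a nonzero norm. -/

open Finset InnerProductSpace

namespace InnerProductSpace

variable {𝕜 E ι : Type*} [RCLike 𝕜] [NormedAddCommGroup E] [InnerProductSpace 𝕜 E]
  [LinearOrder ι] [LocallyFiniteOrderBot ι] [WellFoundedLT ι]

theorem gramSchmidt_eq_sub_sum (f : ι → E) (n : ι) :
    gramSchmidt 𝕜 f n = f n - ∑ i ∈ Iio n,
      (inner 𝕜 (gramSchmidt 𝕜 f i) (f n) / (‖gramSchmidt 𝕜 f i‖ : 𝕜) ^ 2) •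
        gramSchmidt 𝕜 f i :=
  eq_sub_of_add_eq (gramSchmidt_def'' 𝕜 f n).symm

theorem continuousAt_gramSchmidt_apply {v : ι → E} (hv : LinearIndependent 𝕜 v) (n : ι) :
    ContinuousAt (fun w : ι → E => gramSchmidt 𝕜 w n) v := by
  induction n using WellFoundedLT.induction with
  | ind n ih =>
    simp_rw [gramSchmidt_eq_sub_sum (𝕜 := 𝕜) _ n]
    have hvn : ContinuousAt (fun w : ι → E => w n) v := (continuous_apply n).continuousAt
    refine hvn.sub (tendsto_finsetSum _ fun i hi => ?_)
    have hgi := ih i (mem_Iio.mp hi)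
    have hnorm_sq : (‖gramSchmidt 𝕜 v i‖ : 𝕜) ^ 2 ≠ 0 := by
      simpa using gramSchmidt_ne_zero i hv
    exact ((hgi.inner hvn).div ((RCLike.continuous_ofReal.continuousAt.comp hgi.norm).pow 2)
      hnorm_sq).smul hgi

theorem continuousAt_gramSchmidtNormed {v : ι → E} (hv : LinearIndependent 𝕜 v) :
    ContinuousAt (gramSchmidtNormed 𝕜) v := by
  refine continuousAt_pi.mpr fun n => ?_
  have hgn := continuousAt_gramSchmidt_apply hv n
  have hnorm : (‖gramSchmidt 𝕜 v n‖ : 𝕜) ≠ 0 := by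
    simpa using gramSchmidt_ne_zero n hv
  exact ((RCLike.continuous_ofReal.continuousAt.comp hgn.norm).inv₀ hnorm).smul hgn

end InnerProductSpace

/-- The normalized Gram–Schmidt map, sending an `n`-tuple of vectors in a real inner
product space to the `n`-tuple obtained by the Gram–Schmidt orthonormalization
procedure, is continuous at every linearly independent `n`-tuple. -/
theorem gramSchmidtNormed_continuousAt
    {E : Type*} [NormedAddCommGroup E] [InnerProductSpace ℝ E] (n : ℕ)
    (v : Fin n → E) (hv : LinearIndependent ℝ v) :
    haveI : WellFoundedLT (Fin n) := inferInstance
    ContinuousAt (fun w : Fin n → E => InnerProductSpace.gramSchmidtNormed ℝ w) v :=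
  continuousAt_gramSchmidtNormed hv
end

section
/- Let H be a real Hilbert space, X a topological space, n a natural number, and v : X → Hⁿ a continuous map such that the tuple v(x₀) = (v₁(x₀),…,vₙ(x₀)) is linearly independent. Then the map assigning to each x the orthogonal projection operator of H onto the span of {v₁(x),…,vₙ(x)} (regarded as an element of L(H,H) with the operator norm) is continuous at x₀. -/
/-- The orthogonal projection of a real Hilbert space `H` onto the span of finitely many
vectors, regarded as a continuous linear operator `H →L[ℝ] H`. -/
noncomputable def projOntoSpan {H : Type*} [NormedAddCommGroup H] [InnerProductSpace ℝ H]
    [CompleteSpace H] {n : ℕ} (w : Fin n → H) : H →L[ℝ] H :=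
  haveI : FiniteDimensional ℝ (Submodule.span ℝ (Set.range w)) :=
    FiniteDimensional.span_of_finite ℝ (Set.finite_range w)
  (Submodule.span ℝ (Set.range w)).subtypeL.comp
    (Submodule.orthogonalProjection (Submodule.span ℝ (Set.range w)))

/-! Near a linearly independent tuple `w`, the projection onto its span is `∑ i, rankOne eᵢ eᵢ`
for the Gram–Schmidt orthonormalization `e` of `w`, since linear independence is an open
condition. The Gram–Schmidt recursion only divides by the norms of its earlier outputs, which
are nonzero at `w`, so each `eᵢ` depends continuously on the tuple there. -/

open InnerProductSpace Submodule

theorem ContinuousAt.rankOne {𝕜 E F X : Type*} [RCLike 𝕜] [SeminormedAddCommGroup E]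
    [NormedSpace 𝕜 E] [SeminormedAddCommGroup F] [InnerProductSpace 𝕜 F] [TopologicalSpace X]
    {a : X → E} {b : X → F} {x : X} (ha : ContinuousAt a x) (hb : ContinuousAt b x) :
    ContinuousAt (fun u => rankOne 𝕜 (a u) (b u)) x :=
  (ContinuousLinearMap.smulRightL 𝕜 F E).continuous₂.continuousAt.comp₂
    ((innerSL 𝕜).continuous.continuousAt.comp hb) ha

section GramSchmidt

variable {𝕜 E ι : Type*} [RCLike 𝕜] [NormedAddCommGroup E] [InnerProductSpace 𝕜 E]
  [LinearOrder ι] [LocallyFiniteOrderBot ι] [WellFoundedLT ι]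

theorem continuousAt_gramSchmidt {f : ι → E} (hf : LinearIndependent 𝕜 f) (i : ι) :
    ContinuousAt (fun g : ι → E => gramSchmidt 𝕜 g i) f := by
  induction i using WellFoundedLT.induction with
  | _ i ih =>
  have hfi : ContinuousAt (fun g : ι → E => g i) f := (continuous_apply i).continuousAt
  simp_rw [fun g : ι → E => eq_sub_of_add_eq (gramSchmidt_def'' 𝕜 g i).symm]
  refine hfi.sub (tendsto_finsetSum _ fun j hj => ?_)
  have hgj := ih j (Finset.mem_Iio.mp hj)
  have hne : (‖gramSchmidt 𝕜 f j‖ : 𝕜) ^ 2 ≠ 0 := by simpa using gramSchmidt_ne_zero j hf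
  exact ((hgj.inner hfi).div ((RCLike.continuous_ofReal.continuousAt.comp hgj.norm).pow 2)
    hne).smul hgj

theorem continuousAt_gramSchmidtNormed {f : ι → E} (hf : LinearIndependent 𝕜 f) (i : ι) :
    ContinuousAt (fun g : ι → E => gramSchmidtNormed 𝕜 g i) f := by
  have hg := continuousAt_gramSchmidt hf i
  have hne : (‖gramSchmidt 𝕜 f i‖ : 𝕜) ≠ 0 := by simpa using gramSchmidt_ne_zero i hf
  exact ((RCLike.continuous_ofReal.continuousAt.comp hg.norm).inv₀ hne).smul hg

end GramSchmidt

theorem Orthonormal.starProjection_eq_sum_rankOne {𝕜 E ι : Type*} [RCLike 𝕜]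
    [NormedAddCommGroup E] [InnerProductSpace 𝕜 E] [Fintype ι] {e : ι → E} {K : Submodule 𝕜 E}
    [K.HasOrthogonalProjection] (he : Orthonormal 𝕜 e) (hK : span 𝕜 (Set.range e) = K) :
    K.starProjection = ∑ i, rankOne 𝕜 (e i) (e i) := by
  subst hK
  let b := (Module.Basis.span he.linearIndependent).toOrthonormalBasis
    ((span 𝕜 (Set.range e)).subtypeₗᵢ.orthonormal_comp_iff.mp
      (by convert he; ext; simp [Module.Basis.span_apply]))
  have hb : ∀ i, (b i : E) = e i := by simp [b, Module.Basis.span_apply]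
  simpa only [hb] using b.starProjection_eq_sum_rankOne

section projOntoSpan

variable {H : Type*} [NormedAddCommGroup H] [InnerProductSpace ℝ H] [CompleteSpace H] {n : ℕ}

theorem projOntoSpan_eq_sum_rankOne_gramSchmidtNormed {w : Fin n → H}
    (hw : LinearIndependent ℝ w) :
    projOntoSpan w = ∑ i, rankOne ℝ (gramSchmidtNormed ℝ w i) (gramSchmidtNormed ℝ w i) :=
  have : FiniteDimensional ℝ (span ℝ (Set.range w)) :=
    FiniteDimensional.span_of_finite ℝ (Set.finite_range w)
  (gramSchmidtNormed_orthonormal hw).starProjection_eq_sum_rankOne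
    (by rw [span_gramSchmidtNormed_range, span_gramSchmidt])

theorem continuousAt_projOntoSpan {w : Fin n → H} (hw : LinearIndependent ℝ w) :
    ContinuousAt projOntoSpan w := by
  have hsum : ContinuousAt (fun u : Fin n → H =>
      ∑ i, rankOne ℝ (gramSchmidtNormed ℝ u i) (gramSchmidtNormed ℝ u i)) w :=
    tendsto_finsetSum _ fun i _ =>
      (continuousAt_gramSchmidtNormed hw i).rankOne (continuousAt_gramSchmidtNormed hw i)
  refine hsum.congr ?_
  filter_upwards [isOpen_setOfPred_linearIndependent.mem_nhds hw] with u hu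
  exact (projOntoSpan_eq_sum_rankOne_gramSchmidtNormed hu).symm

end projOntoSpan

/-- If `v : X → Hⁿ` is continuous and `v x₀` is a linearly independent tuple in a real
Hilbert space `H`, then the map assigning to each `x` the orthogonal projection operator
of `H` onto the span of `{v₁(x),…,vₙ(x)}` (as an element of `L(H,H)` with the operator
norm) is continuous at `x₀`. -/
theorem projOntoSpan_continuousAt {H : Type*} [NormedAddCommGroup H] [InnerProductSpace ℝ H]
    [CompleteSpace H] {X : Type*} [TopologicalSpace X] (n : ℕ)
    (v : X → Fin n → H) (hv : Continuous v) (x₀ : X)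
    (hli : LinearIndependent ℝ (v x₀)) :
    ContinuousAt (fun x => projOntoSpan (v x)) x₀ :=
  (continuousAt_projOntoSpan hli).comp hv.continuousAt
end
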